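/- arXiv:1904.03489 — 3 statements merged into one kernel-verified Lean document; each statement's English description precedes it below -/
import Mathlib

section
/- Let n be a square-free monic polynomial in F_q[T] with s distinct prime factors, and r ≥ 2. The number of orbits of Γ_0^r(n) acting on P^{r−1}(F_q(T)) is 2^s. -/
set_option synthInstance.maxHeartbeats 400000

/-- The orbit relation of `Γ_0^r(𝔫)` on nonzero vectors of `F_q(T)^r` up to scalars:
`v ∼ w` iff some `γ ∈ Γ_0^r(𝔫)` (a matrix over `A = F_q[T]` with unit determinant whose
first-column entries below the top are divisible by `𝔫`) carries `v` to a nonzero scalar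
multiple of `w`.  Orbits of this relation are exactly the orbits of `Γ_0^r(𝔫)` on
`P^{r−1}(F_q(T))`. -/
def GammaZeroRel {F : Type*} [Field F] (r : ℕ) [NeZero r] (n : Polynomial F)
    (v w : {v : Fin r → RatFunc F // v ≠ 0}) : Prop :=
  ∃ γ : Matrix (Fin r) (Fin r) (Polynomial F), IsUnit γ.det ∧
    (∀ i : Fin r, i ≠ 0 → n ∣ γ i 0) ∧
    ∃ c : RatFunc F, c ≠ 0 ∧
      (γ.map (algebraMap (Polynomial F) (RatFunc F))).mulVec v.1 = c • w.1

/-!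
Modulo a prime `p ∣ n`, every `γ ∈ Γ₀(n)` has first column `(γ₀₀, 0, …, 0)` with `γ₀₀` a unit,
so it preserves the line through `e₀` in `(A/p)^r`. In valuative terms: the condition
`v_p(x_i) > v_p(x_0)` for all `i ≠ 0` is an orbit invariant, and the set of `p ∣ n` for which
it holds is a map from the orbits to the subsets of the `s` primes. On the vector
`(1, ∏_{p ∈ t} p, 0, …, 0)` it takes the value `t`, so the map is onto.

It is injective because every orbit contains such a vector. Scale `x` to a primitive vector
of `A^r`. Bézout matrices acting on the coordinates `1, …, r-1` (these lie in `Γ₀(n)`) move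
it to `(a, b, 0, …, 0)` with `a, b` coprime. Put `d = ∏_{p ∣ b} p` and `m = n / d`. Then
`a m` is coprime to `b`, and an explicit matrix `[[α, β], [n σ, δ]]` of determinant `1`
carries `(1, d)` to `(a, b)`.
-/

open Matrix

namespace Matrix

theorem det_mem_of_col_mem {n R : Type*} [Fintype n] [DecidableEq n] [CommRing R]
    {A : Matrix n n R} {I : Ideal R} (j : n) (h : ∀ i, A i j ∈ I) : A.det ∈ I := by
  rw [det_apply']
  exact I.sum_mem fun σ _ => I.mul_mem_left _ <|
    I.mem_of_dvd (Finset.dvd_prod_of_mem (fun i => A (σ i) i) (Finset.mem_univ j)) (h (σ j))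

theorem dvd_mulVec_apply {m n R : Type*} [Fintype n] [CommRing R] (M : Matrix m n R)
    {x : n → R} {z : R} (hx : ∀ j, z ∣ x j) (i : m) : z ∣ (M *ᵥ x) i :=
  Finset.dvd_sum fun j _ => dvd_mul_of_dvd_right (hx j) _

theorem vecCons_two_injective {n : Type*} {a b : n} (h : a ≠ b) :
    Function.Injective ![a, b] := by
  intro p q
  fin_cases p <;> fin_cases q <;> simp [h, h.symm]

section ExtendAlong
variable {m n R : Type*} [DecidableEq n] [CommRing R]

theorem one_submatrix_mulVec [Fintype n] (f : m → n) (x : n → R) :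
    (1 : Matrix n n R).submatrix f id *ᵥ x = x ∘ f := by
  ext p
  simp [mulVec, dotProduct, one_apply]

theorem mulVec_one_submatrix_apply [Fintype m] [DecidableEq m] {f : m → n}
    (hf : Function.Injective f) (y : m → R) (p : m) :
    ((1 : Matrix n n R).submatrix id f *ᵥ y) (f p) = y p := by
  simp [mulVec, dotProduct, one_apply, hf.eq_iff]

theorem mulVec_one_submatrix_apply_of_notMem [Fintype m] {f : m → n} (y : m → R) {k : n}
    (hk : k ∉ Set.range f) : ((1 : Matrix n n R).submatrix id f *ᵥ y) k = 0 := by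
  simp only [mulVec, dotProduct]
  refine Finset.sum_eq_zero fun p _ => ?_
  rw [submatrix_apply, id, one_apply_ne fun h => hk ⟨p, h.symm⟩, zero_mul]

variable [Fintype m] [DecidableEq m]

/-- `M` acting on the coordinates `f p`, and the identity on the coordinates outside the range
of `f`. -/
def extendAlong (f : m → n) (M : Matrix m m R) : Matrix n n R :=
  1 + (1 : Matrix n n R).submatrix id f * (M - 1) * (1 : Matrix n n R).submatrix f id

theorem extendAlong_apply {f : m → n} (hf : Function.Injective f) (M : Matrix m m R) (p q : m) :
    extendAlong f M (f p) (f q) = M p q := by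
  simp [extendAlong, mul_apply, one_apply, hf.eq_iff]

theorem extendAlong_apply_of_notMem_left {f : m → n} (M : Matrix m m R) {k : n}
    (hk : k ∉ Set.range f) (l : n) : extendAlong f M k l = (1 : Matrix n n R) k l := by
  rw [extendAlong, add_apply, add_eq_left, Matrix.mul_assoc, mul_apply]
  refine Finset.sum_eq_zero fun p _ => ?_
  rw [submatrix_apply, id, one_apply_ne fun h => hk ⟨p, h.symm⟩, zero_mul]

theorem extendAlong_apply_of_notMem_right {f : m → n} (M : Matrix m m R) (k : n) {l : n}
    (hl : l ∉ Set.range f) : extendAlong f M k l = (1 : Matrix n n R) k l := by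
  rw [extendAlong, add_apply, add_eq_left, mul_apply]
  refine Finset.sum_eq_zero fun q _ => ?_
  rw [submatrix_apply, id, one_apply_ne fun h => hl ⟨q, h⟩, mul_zero]

variable [Fintype n]

theorem det_extendAlong {f : m → n} (hf : Function.Injective f) (M : Matrix m m R) :
    (extendAlong f M).det = M.det := by
  rw [extendAlong, Matrix.mul_assoc, det_one_add_mul_comm, Matrix.mul_assoc,
    ← submatrix_mul _ _ _ _ _ Function.bijective_id, Matrix.one_mul, submatrix_one _ hf,
    Matrix.mul_one, add_sub_cancel]

theorem extendAlong_mulVec_apply {f : m → n} (hf : Function.Injective f) (M : Matrix m m R)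
    (x : n → R) (p : m) : (extendAlong f M *ᵥ x) (f p) = (M *ᵥ (x ∘ f)) p := by
  rw [extendAlong, add_mulVec, ← mulVec_mulVec, ← mulVec_mulVec, one_submatrix_mulVec]
  simp [mulVec_one_submatrix_apply hf, sub_mulVec]

theorem extendAlong_mulVec_apply_of_notMem {f : m → n} (M : Matrix m m R) (x : n → R) {k : n}
    (hk : k ∉ Set.range f) : (extendAlong f M *ᵥ x) k = x k := by
  rw [extendAlong, add_mulVec, ← mulVec_mulVec, ← mulVec_mulVec, Pi.add_apply,
    mulVec_one_submatrix_apply_of_notMem _ hk, one_mulVec, add_zero]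

end ExtendAlong

end Matrix

section GammaZero
variable {R : Type*} [CommRing R] {r : ℕ} [NeZero r] {n : R}

variable (r) in
def gammaZero (n : R) : Submonoid (Matrix (Fin r) (Fin r) R) where
  carrier := {γ | IsUnit γ.det ∧ ∀ i, i ≠ 0 → n ∣ γ i 0}
  mul_mem' {γ δ} hγ hδ := by
    refine ⟨by rw [det_mul]; exact hγ.1.mul hδ.1, fun i hi => ?_⟩
    rw [mul_apply]
    refine Finset.dvd_sum fun j _ => ?_
    rcases eq_or_ne j 0 with rfl | hj
    · exact dvd_mul_of_dvd_left (hγ.2 i hi) _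
    · exact dvd_mul_of_dvd_right (hδ.2 j hj) _
  one_mem' := ⟨by simp, fun i hi => by simp [one_apply_ne hi]⟩

theorem adjugate_mem_gammaZero {γ : Matrix (Fin r) (Fin r) R} (hγ : γ ∈ gammaZero r n) :
    γ.adjugate ∈ gammaZero r n := by
  refine ⟨by rw [det_adjugate]; exact hγ.1.pow _, fun i hi => ?_⟩
  rw [adjugate_apply, ← Ideal.mem_span_singleton]
  refine det_mem_of_col_mem 0 fun l => ?_
  rcases eq_or_ne l 0 with rfl | hl
  · simp [hi.symm]
  · rw [updateRow_ne hl, Ideal.mem_span_singleton]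
    exact hγ.2 l hl

theorem extendAlong_mem_gammaZero {f : Fin 2 → Fin r} (hf : Function.Injective f)
    (h0 : 0 ∉ Set.range f) {M : Matrix (Fin 2) (Fin 2) R} (hM : M.det = 1) (n : R) :
    extendAlong f M ∈ gammaZero r n :=
  ⟨by rw [det_extendAlong hf, hM]; exact isUnit_one, fun l hl => by
    rw [extendAlong_apply_of_notMem_right _ _ h0, one_apply_ne hl]; exact dvd_zero n⟩

end GammaZero

def IsPrimitiveVector {ι R : Type*} [CommMonoid R] (u : ι → R) : Prop :=
  ∀ z, (∀ i, z ∣ u i) → IsUnit z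

theorem IsPrimitiveVector.mulVec {n R : Type*} [Fintype n] [DecidableEq n] [CommRing R]
    {u : n → R} (hu : IsPrimitiveVector u) {γ : Matrix n n R} (hγ : IsUnit γ.det) :
    IsPrimitiveVector (γ *ᵥ u) := fun z hz => hu z fun i => by
  have h := dvd_mulVec_apply γ.adjugate hz i
  rwa [mulVec_mulVec, adjugate_mul, smul_mulVec, one_mulVec, Pi.smul_apply, smul_eq_mul,
    hγ.dvd_mul_left] at h

theorem exists_isPrimitiveVector_smul {ι R K : Type*} [Fintype ι] [CommRing R] [IsDomain R]
    [NormalizedGCDMonoid R] [Field K] [Algebra R K] [IsFractionRing R K] {x : ι → K}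
    (hx : x ≠ 0) :
    ∃ u : ι → R, IsPrimitiveVector u ∧ ∃ c : K, c ≠ 0 ∧ x = c • (algebraMap R K ∘ u) := by
  obtain ⟨b, hb⟩ := IsLocalization.exist_integer_multiples_of_finite (nonZeroDivisors R) x
  choose u' hu' using hb
  obtain ⟨i₀, -⟩ := Function.ne_iff.1 hx
  obtain ⟨u, hu, hgcd⟩ := Finset.extract_gcd u' ⟨i₀, Finset.mem_univ i₀⟩
  have hb0 : algebraMap R K b ≠ 0 := IsFractionRing.to_map_ne_zero_of_mem_nonZeroDivisors b.2
  have hxu : x = (algebraMap R K (Finset.univ.gcd u') / algebraMap R K b) •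
      (algebraMap R K ∘ u) := by
    ext i
    have h := hu' i
    rw [hu i (Finset.mem_univ i), Algebra.smul_def, map_mul] at h
    rw [Pi.smul_apply, smul_eq_mul, Function.comp_apply, div_mul_eq_mul_div, h,
      mul_div_cancel_left₀ _ hb0]
  refine ⟨u, fun z hz => isUnit_of_dvd_one (hgcd ▸ Finset.dvd_gcd fun i _ => hz i), _, ?_, hxu⟩
  rintro hc
  rw [hc, zero_smul] at hxu
  exact hx hxu

section Moves
variable {R : Type*} [CommRing R] {r : ℕ} [NeZero r]

theorem exists_det_eq_one_mulVec_eq_zero [IsDomain R] [IsBezout R] [GCDMonoid R] (a b : R) :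
    ∃ M : Matrix (Fin 2) (Fin 2) R, M.det = 1 ∧ (M *ᵥ ![a, b]) 1 = 0 := by
  obtain ⟨a', b', ha, hb, hu⟩ := extract_gcd a b
  obtain ⟨x, y, hxy⟩ := (gcd_isUnit_iff_isRelPrime.1 hu).isCoprime
  refine ⟨!![x, y; -b', a'], by rw [det_fin_two_of]; linear_combination hxy, ?_⟩
  simp
  linear_combination a' * hb - b' * ha

/-- The moves only mix the coordinates other than `0`, so they lie in `Γ₀(n)` for every `n`. -/
theorem exists_mem_gammaZero_mulVec_eq_zero [IsDomain R] [IsBezout R] [GCDMonoid R] (n : R)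
    (u : Fin r → R) {k : Fin r} (hk : k ≠ 0) :
    ∃ γ ∈ gammaZero r n, ∀ j, j ≠ 0 → j ≠ k → (γ *ᵥ u) j = 0 := by
  suffices h : ∀ S : Finset (Fin r), (∀ j ∈ S, j ≠ 0 ∧ j ≠ k) →
      ∃ γ ∈ gammaZero r n, ∀ j ∈ S, (γ *ᵥ u) j = 0 by
    obtain ⟨γ, hγ, hS⟩ := h (Finset.univ.filter fun j => j ≠ 0 ∧ j ≠ k)
      fun j hj => (Finset.mem_filter.1 hj).2
    exact ⟨γ, hγ, fun j hj0 hjk => hS j (by simp [hj0, hjk])⟩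
  intro S
  induction S using Finset.induction_on with
  | empty => exact fun _ => ⟨1, one_mem _, by simp⟩
  | insert j S hjS ih =>
    intro hS
    obtain ⟨hj0, hjk⟩ := hS j (Finset.mem_insert_self j S)
    obtain ⟨γ, hγ, hγS⟩ := ih fun l hl => hS l (Finset.mem_insert_of_mem hl)
    obtain ⟨M, hdet, hM⟩ := exists_det_eq_one_mulVec_eq_zero ((γ *ᵥ u) k) ((γ *ᵥ u) j)
    have hf : Function.Injective ![k, j] := vecCons_two_injective (Ne.symm hjk)
    refine ⟨extendAlong ![k, j] M * γ,
      mul_mem (extendAlong_mem_gammaZero hf (by simp [hk.symm, hj0.symm]) hdet n) hγ,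
      fun l hl => ?_⟩
    rw [← mulVec_mulVec]
    rcases Finset.mem_insert.1 hl with rfl | hlS
    · simpa using (extendAlong_mulVec_apply hf M (γ *ᵥ u) 1).trans hM
    · have hlk : l ≠ k := (hS l (Finset.mem_insert_of_mem hlS)).2
      have hlj : l ≠ j := fun h => hjS (h ▸ hlS)
      rw [extendAlong_mulVec_apply_of_notMem _ _ (by simp [hlk, hlj]), hγS l hlS]

theorem exists_mem_gammaZero_mulVec_eq_single_add_single [IsDomain R] [IsBezout R]
    [GCDMonoid R] (n : R) {u : Fin r → R} (hu : IsPrimitiveVector u) {k : Fin r} (hk : k ≠ 0) :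
    ∃ γ ∈ gammaZero r n, ∃ a b : R, IsCoprime a b ∧
      γ *ᵥ u = Pi.single 0 a + Pi.single k b := by
  obtain ⟨γ, hγ, hzero⟩ := exists_mem_gammaZero_mulVec_eq_zero n u hk
  have hy : γ *ᵥ u = Pi.single 0 ((γ *ᵥ u) 0) + Pi.single k ((γ *ᵥ u) k) := by
    ext j
    by_cases hj0 : j = 0
    · simp [hj0, hk.symm]
    by_cases hjk : j = k
    · simp [hjk, hk]
    simp [hj0, hjk, hzero j hj0 hjk]
  refine ⟨γ, hγ, _, _, IsRelPrime.isCoprime fun z h0 hk' => hu.mulVec hγ.1 z fun j => ?_, hy⟩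
  by_cases hj0 : j = 0
  · exact hj0 ▸ h0
  by_cases hjk : j = k
  · exact hjk ▸ hk'
  rw [hzero j hj0 hjk]
  exact dvd_zero z

theorem exists_det_eq_one_mulVec_eq_of_isCoprime {a b' d m : R}
    (h : IsCoprime (a * m) (d * b')) : ∃ M : Matrix (Fin 2) (Fin 2) R,
      M.det = 1 ∧ d * m ∣ M 1 0 ∧ M *ᵥ ![1, d] = ![a, d * b'] := by
  obtain ⟨x, y, hxy⟩ := h
  set β := y * (a * b' - 1)
  set σ := x * (a * b' - 1)
  refine ⟨!![a - β * d, β; d * m * σ, b' - m * σ], ?_, by simp, ?_⟩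
  · rw [det_fin_two_of]
    linear_combination (1 - a * b') * hxy
  · ext p
    fin_cases p <;> simp <;> ring

theorem exists_mem_gammaZero_mulVec_single_add_single {k : Fin r} (hk : k ≠ 0) {a b' d m : R}
    (h : IsCoprime (a * m) (d * b')) : ∃ γ ∈ gammaZero r (d * m),
      γ *ᵥ (Pi.single 0 1 + Pi.single k d) = Pi.single 0 a + Pi.single k (d * b') := by
  obtain ⟨M, hdet, hM10, hMx⟩ := exists_det_eq_one_mulVec_eq_of_isCoprime h
  have hf : Function.Injective ![0, k] := vecCons_two_injective hk.symm
  refine ⟨extendAlong ![0, k] M, ⟨?_, fun l hl => ?_⟩, ?_⟩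
  · rw [det_extendAlong hf, hdet]
    exact isUnit_one
  · by_cases hlk : l = k
    · have h := extendAlong_apply hf M 1 0
      simp only [Matrix.cons_val_one, Matrix.cons_val_zero] at h
      rwa [hlk, h]
    · rw [extendAlong_apply_of_notMem_left _ (by simp [hl, hlk]), one_apply_ne hl]
      exact dvd_zero _
  · have hx : (Pi.single 0 1 + Pi.single k d : Fin r → R) ∘ ![0, k] = ![1, d] := by
      ext p; fin_cases p <;> simp [hk]
    ext l
    by_cases hl0 : l = 0
    · have h := extendAlong_mulVec_apply hf M (Pi.single 0 1 + Pi.single k d) 0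
      rw [hx, hMx] at h
      simpa [hl0, hk.symm] using h
    by_cases hlk : l = k
    · have h := extendAlong_mulVec_apply hf M (Pi.single 0 1 + Pi.single k d) 1
      rw [hx, hMx] at h
      simpa [hlk, hk] using h
    rw [extendAlong_mulVec_apply_of_notMem _ _ (by simp [hl0, hlk])]
    simp [hl0, hlk]

end Moves

theorem exists_prod_mul_eq_and_isCoprime {R ι : Type*} [CommRing R] [IsBezout R] [Fintype ι]
    [DecidableEq ι] {p : ι → R} (hirr : ∀ i, Irreducible (p i))
    (hcop : Pairwise fun i j => IsCoprime (p i) (p j)) {a b : R} (hab : IsCoprime a b) :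
    ∃ t : Finset ι, ∃ b', b = (∏ i ∈ t, p i) * b' ∧ IsCoprime (a * ∏ i ∈ tᶜ, p i) b := by
  classical
  refine ⟨Finset.univ.filter fun i => p i ∣ b, ?_⟩
  obtain ⟨b', hb'⟩ : ∏ i ∈ Finset.univ.filter (fun i => p i ∣ b), p i ∣ b :=
    Finset.prod_dvd_of_coprime (fun i _ j _ hij => hcop hij) fun i hi =>
      (Finset.mem_filter.1 hi).2
  exact ⟨b', hb', hab.mul_left <| IsCoprime.prod_left fun i hi =>
    (hirr i).coprime_iff_not_dvd.2 (by simpa using hi)⟩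

section Valuation
open IsDedekindDomain
variable {R K : Type*} [CommRing R] [IsDedekindDomain R] [Field K] [Algebra R K]
  [IsFractionRing R K] {r : ℕ} [NeZero r]

/-- Adic valuations are multiplicative (`v x < 1` iff `x ∈ 𝔭`), so this says `x i / x 0 ∈ 𝔭`
for `i ≠ 0`: the reduction of `x` modulo `𝔭` lies on the line through `e₀`. -/
def ReducesToFirstAxis (v : HeightOneSpectrum R) (x : Fin r → K) : Prop :=
  ∀ i, i ≠ 0 → v.valuation K (x i) < v.valuation K (x 0)

theorem reducesToFirstAxis_smul_iff {v : HeightOneSpectrum R} {c : K} (hc : c ≠ 0)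
    {x : Fin r → K} : ReducesToFirstAxis v (c • x) ↔ ReducesToFirstAxis v x := by
  have hpos : 0 < v.valuation K c := (v.valuation K).pos_iff.2 hc
  simp only [ReducesToFirstAxis, Pi.smul_apply, smul_eq_mul, map_mul,
    mul_lt_mul_iff_right₀ hpos]

theorem ReducesToFirstAxis.mulVec {v : HeightOneSpectrum R} {γ : Matrix (Fin r) (Fin r) R}
    (h00 : γ 0 0 ∉ v.asIdeal) (hcol : ∀ i, i ≠ 0 → γ i 0 ∈ v.asIdeal) {x : Fin r → K}
    (hx : ReducesToFirstAxis v x) : ReducesToFirstAxis v (γ.map (algebraMap R K) *ᵥ x) := by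
  intro i hi
  have hpos : 0 < v.valuation K (x 0) := zero_le.trans_lt (hx i hi)
  have hsplit : ∀ k, (γ.map (algebraMap R K) *ᵥ x) k = algebraMap R K (γ k 0) * x 0 +
      ∑ j ∈ Finset.univ.erase 0, algebraMap R K (γ k j) * x j := fun k => by
    rw [Matrix.mulVec, dotProduct, ← Finset.add_sum_erase _ _ (Finset.mem_univ 0)]
    rfl
  have htail : ∀ k, v.valuation K (∑ j ∈ Finset.univ.erase 0, algebraMap R K (γ k j) * x j) <
      v.valuation K (x 0) := fun k =>
    Valuation.map_sum_lt _ hpos.ne' fun j hj => by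
      rw [map_mul]
      exact (mul_le_of_le_one_left' (v.valuation_le_one _)).trans_lt
        (hx j (Finset.ne_of_mem_erase hj))
  have hhead : v.valuation K (algebraMap R K (γ 0 0) * x 0) = v.valuation K (x 0) := by
    rw [map_mul, v.valuation_eq_one_iff_notMem.2 h00, one_mul]
  have h0 : v.valuation K ((γ.map (algebraMap R K) *ᵥ x) 0) = v.valuation K (x 0) := by
    rw [hsplit, (v.valuation K).map_add_eq_of_lt_left (hhead ▸ htail 0), hhead]
  rw [h0, hsplit]
  refine Valuation.map_add_lt _ ?_ (htail i)
  rw [map_mul]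
  exact mul_lt_of_lt_one_left hpos ((v.valuation_lt_one_iff_mem _).2 (hcol i hi))

theorem reducesToFirstAxis_single_add_single_iff (v : HeightOneSpectrum R) {k : Fin r}
    (hk : k ≠ 0) (d : R) :
    ReducesToFirstAxis v (algebraMap R K ∘ (Pi.single 0 1 + Pi.single k d)) ↔
      d ∈ v.asIdeal := by
  rw [← v.valuation_lt_one_iff_mem (K := K)]
  refine ⟨fun h => by simpa [hk] using h k hk, fun h i hi => ?_⟩
  by_cases hik : i = k
  · simpa [hik, hk] using h
  · simp [hi, hik, hk.symm]

end Valuation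

section Cusps
open IsDedekindDomain Polynomial
variable {F : Type*} [Field F] {r : ℕ} [NeZero r] {n : F[X]}

theorem gammaZeroRel_symm {x y : {v : Fin r → RatFunc F // v ≠ 0}}
    (h : GammaZeroRel r n x y) : GammaZeroRel r n y x := by
  obtain ⟨γ, hdet, hcol, c, hc, hγ⟩ := h
  obtain ⟨hdet', hcol'⟩ := adjugate_mem_gammaZero (n := n) ⟨hdet, hcol⟩
  have hdetK : algebraMap F[X] (RatFunc F) γ.det ≠ 0 :=
    (map_ne_zero_iff _ (RatFunc.algebraMap_injective F)).2 hdet.ne_zero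
  refine ⟨γ.adjugate, hdet', hcol', c⁻¹ * algebraMap F[X] (RatFunc F) γ.det,
    mul_ne_zero (inv_ne_zero hc) hdetK, ?_⟩
  have h := congrArg (γ.adjugate.map (algebraMap F[X] (RatFunc F)) *ᵥ ·) hγ
  simp only [mulVec_mulVec, ← Matrix.map_mul, adjugate_mul, mulVec_smul] at h
  rw [map_smul' _ _ _ (map_mul _), Matrix.map_one _ (map_zero _) (map_one _), smul_mulVec,
    one_mulVec] at h
  rw [mul_smul, h, inv_smul_smul₀ hc]

theorem ReducesToFirstAxis.of_gammaZeroRel {v : HeightOneSpectrum F[X]} (hn : n ∈ v.asIdeal)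
    {x y : {v : Fin r → RatFunc F // v ≠ 0}} (h : GammaZeroRel r n x y)
    (hx : ReducesToFirstAxis v x.1) : ReducesToFirstAxis v y.1 := by
  obtain ⟨γ, hdet, hcol, c, hc, hγ⟩ := h
  have hcolv : ∀ i, i ≠ 0 → γ i 0 ∈ v.asIdeal := fun i hi =>
    v.asIdeal.mem_of_dvd (hcol i hi) hn
  have h00 : γ 0 0 ∉ v.asIdeal := fun h00 => v.isPrime.ne_top <|
    v.asIdeal.eq_top_of_isUnit_mem (det_mem_of_col_mem 0 fun i =>
      if hi : i = 0 then hi ▸ h00 else hcolv i hi) hdet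
  rw [← reducesToFirstAxis_smul_iff hc, ← hγ]
  exact hx.mulVec h00 hcolv

theorem reducesToFirstAxis_iff_of_gammaZeroRel {v : HeightOneSpectrum F[X]}
    (hn : n ∈ v.asIdeal) {x y : {v : Fin r → RatFunc F // v ≠ 0}} (h : GammaZeroRel r n x y) :
    ReducesToFirstAxis v x.1 ↔ ReducesToFirstAxis v y.1 :=
  ⟨.of_gammaZeroRel hn h, .of_gammaZeroRel hn (gammaZeroRel_symm h)⟩

theorem Polynomial.dvd_iff_eq_of_monic_of_irreducible {ι : Type*} {p : ι → F[X]}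
    (hirr : ∀ i, Irreducible (p i)) (hpm : ∀ i, (p i).Monic) (hinj : Function.Injective p)
    {i j : ι} : p i ∣ p j ↔ i = j :=
  ⟨fun h => hinj <| eq_of_monic_of_associated (hpm i) (hpm j)
    ((hirr i).associated_of_dvd (hirr j) h), fun h => h ▸ dvd_rfl⟩

theorem Polynomial.dvd_prod_iff_mem_of_monic_of_irreducible {ι : Type*} {p : ι → F[X]}
    (hirr : ∀ i, Irreducible (p i)) (hpm : ∀ i, (p i).Monic) (hinj : Function.Injective p)
    (t : Finset ι) (i : ι) : p i ∣ ∏ j ∈ t, p j ↔ i ∈ t := by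
  rw [(hirr i).prime.dvd_finsetProd_iff]
  refine ⟨fun ⟨j, hj, h⟩ => ?_, fun hi => ⟨i, hi, dvd_rfl⟩⟩
  rwa [(dvd_iff_eq_of_monic_of_irreducible hirr hpm hinj).1 h]

noncomputable def cusp {k : Fin r} (hk : k ≠ 0) (d : F[X]) : {v : Fin r → RatFunc F // v ≠ 0} :=
  ⟨algebraMap F[X] (RatFunc F) ∘ (Pi.single 0 1 + Pi.single k d),
    fun h => by simpa [hk.symm] using congrFun h 0⟩

theorem exists_gammaZeroRel_cusp {s : ℕ} {p : Fin s → F[X]} (hirr : ∀ i, Irreducible (p i))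
    (hpm : ∀ i, (p i).Monic) (hinj : Function.Injective p) (hfac : n = ∏ i, p i) {k : Fin r}
    (hk : k ≠ 0) (x : {v : Fin r → RatFunc F // v ≠ 0}) :
    ∃ t : Finset (Fin s), GammaZeroRel r n (cusp hk (∏ i ∈ t, p i)) x := by
  classical
  have hpcop : Pairwise fun i j => IsCoprime (p i) (p j) := fun i j hij =>
    (hirr i).coprime_iff_not_dvd.2 (mt (dvd_iff_eq_of_monic_of_irreducible hirr hpm hinj).1 hij)
  obtain ⟨u, hu, c, hc, hxu⟩ := exists_isPrimitiveVector_smul (R := F[X]) x.2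
  obtain ⟨γ₁, hγ₁, a, b, hab, hγ₁u⟩ := exists_mem_gammaZero_mulVec_eq_single_add_single n hu hk
  obtain ⟨t, b', hb', hcop⟩ := exists_prod_mul_eq_and_isCoprime hirr hpcop hab
  obtain ⟨γ₂, hγ₂, hγ₂u⟩ := exists_mem_gammaZero_mulVec_single_add_single hk (hb' ▸ hcop)
  rw [Finset.prod_mul_prod_compl, ← hfac] at hγ₂
  rw [← hb', ← hγ₁u] at hγ₂u
  have hmul : (γ₁.adjugate * γ₂) *ᵥ (Pi.single 0 1 + Pi.single k (∏ i ∈ t, p i)) =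
      γ₁.det • u := by
    rw [← mulVec_mulVec, hγ₂u, mulVec_mulVec, adjugate_mul, smul_mulVec, one_mulVec]
  obtain ⟨hdet, hcol⟩ := mul_mem (adjugate_mem_gammaZero hγ₁) hγ₂
  refine ⟨t, _, hdet, hcol, c⁻¹ * algebraMap F[X] (RatFunc F) γ₁.det,
    mul_ne_zero (inv_ne_zero hc)
      ((map_ne_zero_iff _ (RatFunc.algebraMap_injective F)).2 hγ₁.1.ne_zero), ?_⟩
  ext i
  rw [cusp, ← RingHom.map_mulVec, hmul, hxu]
  simp only [Pi.smul_apply, smul_eq_mul, map_mul, Function.comp_apply]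
  field_simp

end Cusps

theorem stmt_5_general {F : Type*} [Field F] (r : ℕ) [NeZero r] (hr : 2 ≤ r)
    (n : Polynomial F) (s : ℕ)
    (p : Fin s → Polynomial F) (hirr : ∀ i, Irreducible (p i)) (hpm : ∀ i, (p i).Monic)
    (hinj : Function.Injective p) (hfac : n = ∏ i, p i) :
    Nat.card (Quot (GammaZeroRel r n)) = 2 ^ s := by
  classical
  have hk : (⟨1, hr⟩ : Fin r) ≠ 0 := Fin.ne_of_val_ne one_ne_zero
  let v (i : Fin s) := IsDedekindDomain.HeightOneSpectrum.ofPrime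
    (Ideal.prime_span_singleton_iff.2 (hirr i).prime)
  have hn (i : Fin s) : n ∈ (v i).asIdeal := by
    simpa [v, Ideal.mem_span_singleton, hfac] using Finset.dvd_prod_of_mem p (Finset.mem_univ i)
  let Φ : Quot (GammaZeroRel r n) → Finset (Fin s) :=
    Quot.lift (fun x => Finset.univ.filter fun i => ReducesToFirstAxis (v i) x.1) fun x y h => by
      simp only [reducesToFirstAxis_iff_of_gammaZeroRel (hn _) h]
  have hΦ (t : Finset (Fin s)) : Φ (Quot.mk _ (cusp hk (∏ i ∈ t, p i))) = t := by
    ext i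
    simp only [Φ, Finset.mem_filter, Finset.mem_univ, true_and]
    rw [cusp, reducesToFirstAxis_single_add_single_iff _ hk]
    simp [v, Ideal.mem_span_singleton,
      Polynomial.dvd_prod_iff_mem_of_monic_of_irreducible hirr hpm hinj]
  let e : Quot (GammaZeroRel r n) ≃ Finset (Fin s) :=
    { toFun := Φ
      invFun := fun t => Quot.mk _ (cusp hk (∏ i ∈ t, p i))
      left_inv := Quot.ind fun x => by
        obtain ⟨t, h⟩ := exists_gammaZeroRel_cusp hirr hpm hinj hfac hk x
        rw [← Quot.sound h, hΦ]
      right_inv := hΦ }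
  rw [Nat.card_congr e, Nat.card_eq_fintype_card, Fintype.card_finset, Fintype.card_fin]

/-- for a square-free monic `𝔫 ∈ F_q[T]` with `s` distinct prime factors and
`r ≥ 2`, the number of orbits of `Γ_0^r(𝔫)` on `P^{r−1}(F_q(T))` is `2^s`. -/
theorem stmt_5 {F : Type*} [Field F] [Fintype F] (r : ℕ) [NeZero r] (hr : 2 ≤ r)
    (n : Polynomial F) (hmon : n.Monic) (hsf : Squarefree n) (s : ℕ)
    (p : Fin s → Polynomial F) (hirr : ∀ i, Irreducible (p i)) (hpm : ∀ i, (p i).Monic)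
    (hinj : Function.Injective p) (hfac : n = ∏ i, p i) :
    Nat.card (Quot (GammaZeroRel r n)) = 2 ^ s :=
  stmt_5_general r hr n s p hirr hpm hinj hfac
end

section
/- Let K be a non-archimedean local field with ring of integers O, uniformizer π, and residue field of size q. The matrices { ((u_s | 0), I_{r−s}; I_s, 0) : 1 ≤ s ≤ r, u_s ∈ Mat_{(r−s)×1}(F_q) } form a complete set of representatives of the left cosets of the parahoric subgroup I^1 = {(a b; c d) ∈ GL_r(O) : c ≡ 0 mod π} in GL_r(O). -/
/-- The representative matrix `((u_s | 0), I_{r−s}; I_s, 0)`, where the column `u_s` over the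
residue field is lifted to `O` via a section `σ`. -/
def WRep {O k : Type*} [CommRing O] {r : ℕ} (σ : k → O) (s : ℕ)
    (u : Fin (r - s) → k) : Matrix (Fin r) (Fin r) O :=
  fun j c =>
    if hj : (j : ℕ) < r - s then
      (if (c : ℕ) = 0 then σ (u ⟨j, hj⟩)
       else if (c : ℕ) = s + (j : ℕ) then 1 else 0)
    else (if (c : ℕ) = (j : ℕ) - (r - s) then 1 else 0)

/-!
`g = W h` with `h ∈ I¹` means exactly that the reductions mod `π` of the first columns of `g` and
`W` span the same line in `F_q^r`, since `I¹` is the stabiliser of the line through `e₀` mod `π`.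
The reduced first column of the representative indexed by `(s, u_s)` is `(u_s, 1, 0, …, 0)`, and
every line is spanned by exactly one such vector: `1` must sit at the last nonzero coordinate.
-/

open IsLocalRing Matrix

-- The vector `(u, 1, 0, …, 0)` with the `1` in position `m`: the representative of a point of
-- `ℙ^{r-1}` whose last nonzero coordinate is `1`.
def normalizedVec {k : Type*} [Zero k] [One k] {r : ℕ} (m : ℕ) (u : Fin m → k) : Fin r → k :=
  fun j => if h : (j : ℕ) < m then u ⟨j, h⟩ else if (j : ℕ) = m then 1 else 0

theorem map_WRep_apply_zero {O K : Type*} [CommRing O] [Semiring K] {r : ℕ} [NeZero r]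
    (f : O →+* K) {σ : K → O} (hσ : ∀ x, f (σ x) = x) (s : ℕ) (u : Fin (r - s) → K)
    (j : Fin r) : f (WRep σ s u j 0) = normalizedVec (r - s) u j := by
  unfold WRep normalizedVec
  split_ifs <;> simp_all
  omega

-- `((u_s | 0), I_{r−s}; I_s, 0)⁻¹ = (0, I_s; I_{r−s}, −(u_s | 0))`
def WRepInv {O k : Type*} [CommRing O] {r : ℕ} (σ : k → O) (s : ℕ)
    (u : Fin (r - s) → k) : Matrix (Fin r) (Fin r) O :=
  fun i c =>
    if (i : ℕ) < s then (if (c : ℕ) = (i : ℕ) + (r - s) then 1 else 0)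
    else if h : (i : ℕ) - s < r - s then
      (if (c : ℕ) = (i : ℕ) - s then 1 else 0)
        - (if (c : ℕ) = r - s then σ (u ⟨(i : ℕ) - s, h⟩) else 0)
    else 0

theorem WRep_mul_WRepInv {O k : Type*} [CommRing O] {r : ℕ} (σ : k → O) {s : ℕ}
    (hs : 1 ≤ s) (hsr : s ≤ r) (u : Fin (r - s) → k) :
    WRep σ s u * WRepInv σ s u = 1 := by
  ext a b
  rw [mul_apply, one_apply]
  by_cases ha : (a : ℕ) < r - s
  · rw [Finset.sum_eq_add_of_mem ⟨0, by omega⟩ ⟨s + a, by omega⟩ (Finset.mem_univ _)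
      (Finset.mem_univ _) (by simp [Fin.ext_iff]; omega)
      fun c _ hc => by simp only [ne_eq, Fin.ext_iff] at hc; simp [WRep, ha, hc]]
    simp [WRep, WRepInv, ha, Fin.ext_iff, show 0 < s by omega, show s ≠ 0 by omega, eq_comm]
  · rw [Finset.sum_eq_single_of_mem ⟨a - (r - s), by omega⟩ (Finset.mem_univ _)
      fun c _ hc => by simp only [ne_eq, Fin.ext_iff] at hc; simp [WRep, ha, hc]]
    simp [WRep, WRepInv, ha, Fin.ext_iff, show (a : ℕ) - (r - s) < s by omega,
      show (a : ℕ) - (r - s) + (r - s) = a by omega, eq_comm]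

theorem isUnit_det_WRep {O k : Type*} [CommRing O] {r : ℕ} (σ : k → O) {s : ℕ}
    (hs : 1 ≤ s) (hsr : s ≤ r) (u : Fin (r - s) → k) : IsUnit (WRep σ s u).det :=
  isUnit_det_of_right_inverse (WRep_mul_WRepInv σ hs hsr u)

theorem RingHom.col_ne_zero_of_isUnit_det {R S n : Type*} [CommRing R] [CommRing S]
    [Nontrivial S] [Fintype n] [DecidableEq n] (f : R →+* S) {g : Matrix n n R}
    (hg : IsUnit g.det) (j : n) :
    (fun i => f (g i j)) ≠ 0 := by
  intro h
  have hdet := hg.map f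
  rw [f.map_det] at hdet
  exact hdet.ne_zero (det_eq_zero_of_column_eq_zero j fun i => congrFun h i)

theorem RingHom.map_mul_apply_eq_mulVec {R S n : Type*} [CommRing R] [CommRing S] [Fintype n]
    (f : R →+* S) (A B : Matrix n n R) (i j : n) :
    f ((A * B) i j) = (A.map f *ᵥ fun l => f (B l j)) i := by
  simp [mul_apply, mulVec, dotProduct, map_sum]

theorem exists_eq_mul_col_mem_maximalIdeal_iff {O n : Type*} [CommRing O] [IsLocalRing O]
    [Fintype n] [DecidableEq n] (i₀ : n) {g W : Matrix n n O} (hg : IsUnit g.det)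
    (hW : IsUnit W.det) :
    (∃ h : Matrix n n O, IsUnit h.det ∧ (∀ i, i ≠ i₀ → h i i₀ ∈ maximalIdeal O) ∧ g = W * h) ↔
      ∃ c : ResidueField O, (fun i => residue O (g i i₀)) = c • fun i => residue O (W i i₀) := by
  constructor
  · rintro ⟨h, -, hcol, rfl⟩
    refine ⟨residue O (h i₀ i₀), funext fun i => ?_⟩
    rw [(residue O).map_mul_apply_eq_mulVec, mulVec, dotProduct,
      Finset.sum_eq_single i₀ (fun l _ hl => by simp [(residue_eq_zero_iff _).2 (hcol l hl)])
        (by simp)]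
    simp [mul_comm]
  · rintro ⟨c, hc⟩
    refine ⟨W⁻¹ * g, by simpa [det_mul] using (W.isUnit_nonsing_inv_det hW).mul hg,
      fun i hi => ?_, (W.mul_nonsing_inv_cancel_left g hW).symm⟩
    have hWW : residue O ((W⁻¹ * W) i i₀) = 0 := by simp [W.nonsing_inv_mul hW, hi]
    rw [← residue_eq_zero_iff, (residue O).map_mul_apply_eq_mulVec, hc, mulVec_smul,
      Pi.smul_apply, ← (residue O).map_mul_apply_eq_mulVec, hWW, smul_zero]

section NormalForm

variable {k : Type*} [Field k] {r : ℕ} {v : Fin r → k}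

theorem eq_smul_normalizedVec_iff (hv : v ≠ 0) (m : Fin r) (u : Fin m → k) :
    (∃ c : k, v = c • normalizedVec m u) ↔
      v m ≠ 0 ∧ (∀ j, m < j → v j = 0) ∧ ∀ j : Fin m, u j = v (Fin.castLE m.isLt.le j) / v m := by
  constructor
  · rintro ⟨c, rfl⟩
    have hc : c ≠ 0 := by rintro rfl; exact hv (zero_smul k _)
    refine ⟨by simpa [normalizedVec] using hc, fun j hj => ?_, fun j => ?_⟩
    · simp [normalizedVec, show ¬ (j : ℕ) < m by omega, show (j : ℕ) ≠ m by omega]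
    · simp [normalizedVec, hc]
  · rintro ⟨hm, hlast, hu⟩
    refine ⟨v m, funext fun j => ?_⟩
    rcases lt_trichotomy j m with hj | rfl | hj
    · simp [normalizedVec, hj, hu, mul_div_cancel₀ _ hm]
    · simp [normalizedVec]
    · simp [normalizedVec, hlast j hj, show ¬ (j : ℕ) < m by omega, show (j : ℕ) ≠ m by omega]

theorem exists_last_ne_zero (hv : v ≠ 0) : ∃ m, v m ≠ 0 ∧ ∀ j, m < j → v j = 0 := by
  classical
  have hS : (Finset.univ.filter fun j => v j ≠ 0).Nonempty := by
    simpa [Finset.filter_nonempty_iff, funext_iff] using hv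
  refine ⟨_, (Finset.mem_filter.1 (Finset.max'_mem _ hS)).2, fun j hj => ?_⟩
  by_contra hvj
  exact (Finset.le_max' _ j (by simpa using hvj)).not_gt hj

theorem eq_of_last_ne_zero {a b : Fin r} (ha : v a ≠ 0) (ha' : ∀ j, a < j → v j = 0)
    (hb : v b ≠ 0) (hb' : ∀ j, b < j → v j = 0) : a = b := by
  by_contra hab
  rcases lt_or_gt_of_ne hab with h | h
  exacts [hb (ha' b h), ha (hb' a h)]

theorem existsUnique_smul_normalizedVec (hv : v ≠ 0) :
    ∃! p : Σ s : Fin r, Fin (r - (s + 1)) → k,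
      ∃ c : k, v = c • normalizedVec (r - (p.1 + 1)) p.2 := by
  obtain ⟨m, hm, hlast⟩ := exists_last_ne_zero hv
  refine ⟨⟨m.rev, fun j => v (Fin.castLE m.rev.rev.isLt.le j) / v m.rev.rev⟩,
    (eq_smul_normalizedVec_iff hv m.rev.rev _).2
      ⟨by simpa using hm, by simpa using hlast, fun _ => rfl⟩, ?_⟩
  rintro ⟨s, u⟩ hsu
  obtain ⟨hs, hslast, hu⟩ := (eq_smul_normalizedVec_iff hv s.rev u).1 hsu
  obtain rfl : s = m.rev := by
    rw [← Fin.rev_inj, Fin.rev_rev]; exact eq_of_last_ne_zero hs hslast hm hlast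
  exact Sigma.ext rfl (heq_of_eq (funext hu))

end NormalForm

theorem stmt_7_general {O : Type*} [CommRing O] [IsDomain O] [IsDiscreteValuationRing O]
    (π : O) (hπ : Irreducible π)
    (σ : IsLocalRing.ResidueField O → O)
    (hσ : ∀ x, IsLocalRing.residue O (σ x) = x)
    (r : ℕ) [NeZero r] (g : Matrix (Fin r) (Fin r) O) (hg : IsUnit g.det) :
    ∃! p : Σ s : Fin r, Fin (r - ((s : ℕ) + 1)) → IsLocalRing.ResidueField O,
      ∃ h : Matrix (Fin r) (Fin r) O, IsUnit h.det ∧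
        (∀ i : Fin r, i ≠ 0 → h i 0 ∈ Ideal.span {π}) ∧
        g = WRep σ ((p.1 : ℕ) + 1) p.2 * h := by
  refine (existsUnique_congr fun p => ?_).2
    (existsUnique_smul_normalizedVec ((residue O).col_ne_zero_of_isUnit_det hg 0))
  have hW := isUnit_det_WRep σ (by omega) (by omega) p.2
  rw [← hπ.maximalIdeal_eq, exists_eq_mul_col_mem_maximalIdeal_iff 0 hg hW]
  simp only [map_WRep_apply_zero (residue O) hσ]

/-- for a non-archimedean local field with ring of integers `O`, uniformizer
`π` and finite residue field `F_q`, the matrices `((u_s | 0), I_{r−s}; I_s, 0)` with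
`1 ≤ s ≤ r` and `u_s ∈ Mat_{(r−s)×1}(F_q)` form a complete set of representatives of the
left cosets of `I^1 = {(a b; c d) ∈ GL_r(O) : c ≡ 0 mod π}` in `GL_r(O)`: every
`g ∈ GL_r(O)` is `W·h` with `h ∈ I^1` for a unique representative `W`. -/
theorem stmt_7 {O : Type*} [CommRing O] [IsDomain O] [IsDiscreteValuationRing O]
    (π : O) (hπ : Irreducible π) (q : ℕ) [Fintype (IsLocalRing.ResidueField O)]
    (hq : Fintype.card (IsLocalRing.ResidueField O) = q)
    (σ : IsLocalRing.ResidueField O → O)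
    (hσ : ∀ x, IsLocalRing.residue O (σ x) = x)
    (r : ℕ) [NeZero r] (g : Matrix (Fin r) (Fin r) O) (hg : IsUnit g.det) :
    ∃! p : Σ s : Fin r, Fin (r - ((s : ℕ) + 1)) → IsLocalRing.ResidueField O,
      ∃ h : Matrix (Fin r) (Fin r) O, IsUnit h.det ∧
        (∀ i : Fin r, i ≠ 0 → h i 0 ∈ Ideal.span {π}) ∧
        g = WRep σ ((p.1 : ℕ) + 1) p.2 * h :=
  stmt_7_general π hπ σ hσ r g hg
end

section
/- Let K be a non-archimedean local field with uniformizer π. Then GL_r(K) decomposes as a disjoint union P(K)·K^×·I^1 ⊔ P(K)·w·K^×·I^1, where P(K) is the mirabolic subgroup of matrices (1 b; 0 d) with d ∈ GL_{r−1}(K), w is the permutation matrix (0 I_{r−1}; 1 0), and I^1 is the parahoric subgroup of GL_r(O) of matrices whose below-diagonal first-column entries lie in πO. In particular, w ∉ P(K)·K^×·I^1. -/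
/-!
Write `e₀` for the first basis vector. A mirabolic `p` fixes `e₀`, so for `g = p · w' · z · h` the
vector `g⁻¹ e₀` is `z⁻¹ h⁻¹ w'⁻¹ e₀`, a multiple of column `0` of `h⁻¹ ∈ I^1` when `w' = 1` and of
column `1` when `w' = w`; conversely, if `g⁻¹ e₀` is a multiple of such a column, then `g` lies in
the corresponding double coset. Modulo `π` a matrix of `I^1` has first column `(unit, 0, …, 0)`, so
its column `0` has a unit top entry and all other entries in `πO`, while its column `1` has a unit
entry below the top. Scaling `g⁻¹ e₀` to an integral vector with an entry `1` shows that one of the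
two cases always occurs. They cannot both occur: if `z u = z' u'` with `u` of the first kind and
`u'` of the second, then `u₀ u'ᵢ = uᵢ u'₀` is a unit for a suitable `i ≠ 0` and lies in `πO`.
-/

section

variable {O K : Type*} [CommRing O] [IsDomain O] [IsDiscreteValuationRing O]
  [Field K] [Algebra O K] [IsFractionRing O K] {r : ℕ} [NeZero r]

/-- The mirabolic subgroup `P(K)` of matrices `(1 b; 0 d)` with `d ∈ GL_{r−1}(K)`. -/
def MirabolicMem (p : Matrix (Fin r) (Fin r) K) : Prop :=
  p 0 0 = 1 ∧ (∀ i : Fin r, i ≠ 0 → p i 0 = 0) ∧ IsUnit p.det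

/-- The parahoric subgroup `I^1 ⊂ GL_r(O)` (viewed inside `GL_r(K)`): integral invertible
matrices whose first-column entries below the top lie in `πO`. -/
def ParahoricMem (π : O) (h : Matrix (Fin r) (Fin r) K) : Prop :=
  ∃ H : Matrix (Fin r) (Fin r) O,
    (∀ i j, h i j = algebraMap O K (H i j)) ∧ IsUnit H.det ∧
      ∀ i : Fin r, i ≠ 0 → H i 0 ∈ Ideal.span {π}

/-- The permutation matrix `w = (0 I_{r−1}; 1 0)`. -/
def Wperm : Matrix (Fin r) (Fin r) K :=
  fun i j =>
    if (i : ℕ) + 1 = r then (if (j : ℕ) = 0 then 1 else 0)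
    else (if (j : ℕ) = (i : ℕ) + 1 then 1 else 0)

/-- Membership in the double coset `P(K)·K^×·I^1`. -/
def InPKI (π : O) (g : Matrix (Fin r) (Fin r) K) : Prop :=
  ∃ (p h : Matrix (Fin r) (Fin r) K) (z : K), MirabolicMem p ∧ z ≠ 0 ∧
    ParahoricMem π h ∧ g = p * (z • h)

/-- Membership in the double coset `P(K)·w·K^×·I^1`. -/
def InPwKI (π : O) (g : Matrix (Fin r) (Fin r) K) : Prop :=
  ∃ (p h : Matrix (Fin r) (Fin r) K) (z : K), MirabolicMem p ∧ z ≠ 0 ∧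
    ParahoricMem π h ∧ g = p * Wperm * (z • h)

end

open Matrix

namespace Matrix

variable {R ι : Type*} [CommRing R] [Fintype ι] {M N : Matrix ι ι R} {i₀ : ι}

theorem mul_apply_of_forall_ne_apply_eq_zero {j : ι} (hM : ∀ k, k ≠ i₀ → M k j = 0) (i : ι) :
    (N * M) i j = N i i₀ * M i₀ j := by
  rw [mul_apply, Finset.sum_eq_single i₀ (fun k _ hk => by rw [hM k hk, mul_zero])
    (by simp)]

variable [DecidableEq ι]

theorem isUnit_apply_of_mul_eq_one (hNM : N * M = 1) (hM : ∀ k, k ≠ i₀ → M k i₀ = 0) :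
    IsUnit (M i₀ i₀) :=
  IsUnit.of_mul_eq_one_right (N i₀ i₀) <| by
    rw [← mul_apply_of_forall_ne_apply_eq_zero hM, hNM, one_apply_eq]

theorem apply_eq_zero_of_mul_eq_one (hNM : N * M = 1) (hM : ∀ k, k ≠ i₀ → M k i₀ = 0)
    {i : ι} (hi : i ≠ i₀) : N i i₀ = 0 :=
  (isUnit_apply_of_mul_eq_one hNM hM).mul_left_eq_zero.mp <| by
    rw [← mul_apply_of_forall_ne_apply_eq_zero hM, hNM, one_apply_ne hi]

theorem exists_ne_apply_ne_zero_of_mul_eq_one [Nontrivial R] (hNM : N * M = 1)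
    (hM : ∀ k, k ≠ i₀ → M k i₀ = 0) {c : ι} (hc : c ≠ i₀) : ∃ i, i ≠ i₀ ∧ M i c ≠ 0 := by
  by_contra! hMc
  have := mul_apply_of_forall_ne_apply_eq_zero (N := N) hMc c
  rw [hNM, one_apply_eq, apply_eq_zero_of_mul_eq_one hNM hM hc, zero_mul] at this
  exact one_ne_zero this

theorem map_nonsing_inv {S : Type*} [CommRing S] (f : R →+* S) (hM : IsUnit M.det) :
    M⁻¹.map f = (M.map f)⁻¹ :=
  (inv_eq_left_inv <| by
    rw [← Matrix.map_mul, nonsing_inv_mul _ hM, Matrix.map_one _ f.map_zero f.map_one]).symm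

end Matrix

section FractionField

variable {O K : Type*} [CommRing O] [Field K] [Algebra O K] [IsFractionRing O K]

theorem mul_eq_mul_of_smul_eq_smul {ι : Type*} {z z' : K} (hz : z ≠ 0) {u u' : ι → O}
    (h : z • (algebraMap O K ∘ u) = z' • (algebraMap O K ∘ u')) (i j : ι) :
    u i * u' j = u j * u' i := by
  have hk : ∀ k, z * algebraMap O K (u k) = z' * algebraMap O K (u' k) := fun k => congrFun h k
  apply IsFractionRing.injective O K
  apply mul_left_cancel₀ hz
  simp only [map_mul]
  linear_combination algebraMap O K (u' j) * hk i - algebraMap O K (u' i) * hk j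

variable [IsDomain O] [IsDiscreteValuationRing O]

theorem exists_eq_smul_algebraMap_comp {ι : Type*} [Finite ι] {v : ι → K} (hv : v ≠ 0) :
    ∃ z : K, z ≠ 0 ∧ ∃ w : ι → O, (∃ j, w j = 1) ∧ v = z • (algebraMap O K ∘ w) := by
  obtain ⟨b, hb⟩ := IsLocalization.exist_integer_multiples_of_finite (nonZeroDivisors O) v
  choose u hu using hb
  have hb0 : algebraMap O K b ≠ 0 := IsFractionRing.to_map_ne_zero_of_mem_nonZeroDivisors b.2
  have hv_eq : ∀ i, v i = algebraMap O K (u i) / algebraMap O K b := fun i => by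
    rw [hu i, Algebra.smul_def, mul_div_cancel_left₀ _ hb0]
  have : Nonempty ι := not_isEmpty_iff.mp fun _ => hv (Subsingleton.elim _ _)
  obtain ⟨j, hj⟩ := Finite.exists_min fun i => IsDiscreteValuationRing.addVal O (u i)
  choose w hw using fun i => IsDiscreteValuationRing.addVal_le_iff_dvd.mp (hj i)
  have huj : u j ≠ 0 := fun h => hv <| funext fun i => by simp [hv_eq, hw i, h]
  refine ⟨algebraMap O K (u j) / algebraMap O K b,
    div_ne_zero ((map_ne_zero_iff _ (IsFractionRing.injective O K)).mpr huj) hb0, w,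
    ⟨j, mul_left_cancel₀ huj (by rw [mul_one, ← hw j])⟩, funext fun i => ?_⟩
  rw [hv_eq, hw i, map_mul]
  simp only [Pi.smul_apply, Function.comp_apply, smul_eq_mul]
  ring

end FractionField

section Mirabolic

variable {K : Type*} [Field K] {r : ℕ} [NeZero r]

theorem mirabolicMem_iff {p : Matrix (Fin r) (Fin r) K} :
    MirabolicMem p ↔ p *ᵥ Pi.single 0 1 = Pi.single 0 1 ∧ IsUnit p.det := by
  simp only [MirabolicMem, mulVec_single_one, funext_iff, col_apply, Pi.single_apply]
  constructor
  · rintro ⟨h0, hi, hdet⟩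
    exact ⟨fun i => by split_ifs with h <;> simp_all, hdet⟩
  · rintro ⟨h, hdet⟩
    exact ⟨by simpa using h 0, fun i hi => by simpa [hi] using h i, hdet⟩

theorem exists_mirabolicMem_mul_eq_iff {g X : Matrix (Fin r) (Fin r) K} (hg : IsUnit g.det)
    (hX : IsUnit X.det) :
    (∃ p, MirabolicMem p ∧ g = p * X) ↔ X⁻¹ *ᵥ Pi.single 0 1 = g⁻¹ *ᵥ Pi.single 0 1 := by
  constructor
  · rintro ⟨p, hp, rfl⟩
    obtain ⟨hpe, hpdet⟩ := mirabolicMem_iff.mp hp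
    have hpinv : p⁻¹ *ᵥ Pi.single 0 1 = Pi.single 0 1 := by
      conv_lhs => rw [← hpe]
      rw [mulVec_mulVec, nonsing_inv_mul _ hpdet, one_mulVec]
    rw [Matrix.mul_inv_rev, ← mulVec_mulVec, hpinv]
  · intro h
    refine ⟨g * X⁻¹, mirabolicMem_iff.mpr ⟨?_, ?_⟩, (nonsing_inv_mul_cancel_right X g hX).symm⟩
    · rw [← mulVec_mulVec, h, mulVec_mulVec, mul_nonsing_inv _ hg, one_mulVec]
    · rw [det_mul]
      exact hg.mul (isUnit_nonsing_inv_det X hX)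

end Mirabolic

section Wperm

variable {K : Type*} [Field K] {r : ℕ} [NeZero r]

theorem wperm_eq_permMatrix :
    (Wperm : Matrix (Fin r) (Fin r) K) = (Equiv.addRight (1 : Fin r)).permMatrix K := by
  obtain ⟨n, rfl⟩ := Nat.exists_eq_succ_of_ne_zero (NeZero.ne r)
  ext i j
  have := i.isLt
  have := j.isLt
  simp only [Wperm, Equiv.Perm.permMatrix, PEquiv.toMatrix_apply, Equiv.toPEquiv_apply,
    Option.mem_def, Option.some.injEq, Equiv.coe_addRight, Fin.ext_iff, Fin.val_add_one,
    Fin.val_last]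
  split_ifs <;> first | rfl | (exfalso; omega)

theorem isUnit_det_wperm : IsUnit (Wperm : Matrix (Fin r) (Fin r) K).det := by
  rw [wperm_eq_permMatrix, det_permutation]
  exact ((Equiv.Perm.sign _).isUnit.map (Int.castRingHom K))

theorem wperm_mulVec_single_one (hr : 2 ≤ r) :
    (Wperm : Matrix (Fin r) (Fin r) K) *ᵥ Pi.single 1 1 = Pi.single 0 1 := by
  ext i
  have := i.isLt
  simp only [mulVec_single_one, col_apply, Wperm, Pi.single_apply, Fin.ext_iff, Fin.val_one',
    Fin.val_zero, Nat.mod_eq_of_lt (show 1 < r by omega)]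
  split_ifs <;> first | rfl | contradiction | (exfalso; omega)

end Wperm

section IntegralParahoric

variable {O : Type*} [CommRing O] {r : ℕ} [NeZero r] {π : O}

def IsIntegralParahoric (π : O) (H : Matrix (Fin r) (Fin r) O) : Prop :=
  IsUnit H.det ∧ ∀ i : Fin r, i ≠ 0 → H i 0 ∈ Ideal.span {π}

theorem parahoricMem_iff {K : Type*} [Field K] [Algebra O K] {h : Matrix (Fin r) (Fin r) K} :
    ParahoricMem π h ↔ ∃ H, IsIntegralParahoric π H ∧ h = H.map (algebraMap O K) := by
  simp only [ParahoricMem, IsIntegralParahoric, ← Matrix.ext_iff, Matrix.map_apply]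
  exact exists_congr fun H => by tauto

theorem exists_isIntegralParahoric_col_zero_eq {u : Fin r → O} (hu₀ : IsUnit (u 0))
    (hu : ∀ i, i ≠ 0 → u i ∈ Ideal.span {π}) :
    ∃ H, IsIntegralParahoric π H ∧ ∀ i, H i 0 = u i := by
  refine ⟨(1 : Matrix (Fin r) (Fin r) O).updateCol 0 u, ⟨?_, fun i hi => ?_⟩, fun i => ?_⟩
  · rwa [← Matrix.cramer_apply, Matrix.cramer_one]
  · simpa using hu i hi
  · simp

theorem exists_isIntegralParahoric_col_eq {u : Fin r → O} {c j : Fin r} (hc : c ≠ 0) (hj : j ≠ 0)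
    (hu : IsUnit (u j)) : ∃ H, IsIntegralParahoric π H ∧ ∀ i, H i c = u i := by
  set σ := Equiv.swap c j
  have hσ : ∀ i, σ i = 0 ↔ i = 0 := fun i => by
    nth_rewrite 1 [← Equiv.swap_apply_of_ne_of_ne hc.symm hj.symm]
    exact σ.injective.eq_iff
  refine ⟨((1 : Matrix (Fin r) (Fin r) O).updateCol c (u ∘ σ)).submatrix σ id,
    ⟨?_, fun i hi => ?_⟩, fun i => ?_⟩
  · rw [Matrix.det_permute, ← Matrix.cramer_apply, Matrix.cramer_one]
    simpa [σ] using ((Equiv.Perm.sign σ).isUnit.map (Int.castRingHom O)).mul hu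
  · simp [Matrix.updateCol_ne hc.symm, Matrix.one_apply_ne ((hσ i).not.mpr hi)]
  · simp [σ, Equiv.swap_apply_self]

theorem inPwKI_wperm {K : Type*} [Field K] [Algebra O K] (π : O) :
    InPwKI π (Wperm : Matrix (Fin r) (Fin r) K) :=
  ⟨1, 1, 1, mirabolicMem_iff.mpr ⟨one_mulVec _, by simp⟩, one_ne_zero,
    parahoricMem_iff.mpr ⟨1, ⟨by simp, fun i hi => by simp [one_apply_ne hi]⟩, by simp⟩, by simp⟩

end IntegralParahoric

section DiscreteValuationRing

variable {O : Type*} [CommRing O] [IsDomain O] [IsDiscreteValuationRing O] {π : O}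

theorem mem_span_singleton_iff_residue_eq_zero (hπ : Irreducible π) (x : O) :
    x ∈ Ideal.span {π} ↔ IsLocalRing.residue O x = 0 := by
  rw [← (IsDiscreteValuationRing.irreducible_iff_uniformizer π).mp hπ,
    IsLocalRing.residue_eq_zero_iff]

theorem mem_span_singleton_iff_not_isUnit (hπ : Irreducible π) (x : O) :
    x ∈ Ideal.span {π} ↔ ¬ IsUnit x := by
  rw [mem_span_singleton_iff_residue_eq_zero hπ, ← IsLocalRing.residue_ne_zero_iff_isUnit,
    not_not]

namespace IsIntegralParahoric

variable {r : ℕ} [NeZero r] {H : Matrix (Fin r) (Fin r) O}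

theorem residue_apply_eq_zero (hπ : Irreducible π) (hH : IsIntegralParahoric π H) :
    ∀ i, i ≠ 0 → H.map (IsLocalRing.residue O) i 0 = 0 := fun i hi =>
  (mem_span_singleton_iff_residue_eq_zero hπ _).mp (hH.2 i hi)

theorem residue_inv_mul_eq_one (hH : IsIntegralParahoric π H) :
    H⁻¹.map (IsLocalRing.residue O) * H.map (IsLocalRing.residue O) = 1 := by
  rw [← Matrix.map_mul, Matrix.nonsing_inv_mul _ hH.1, Matrix.map_one _ (map_zero _) (map_one _)]

theorem isUnit_apply_zero_zero (hπ : Irreducible π) (hH : IsIntegralParahoric π H) :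
    IsUnit (H 0 0) :=
  (IsLocalRing.residue_ne_zero_iff_isUnit _).mp
    (Matrix.isUnit_apply_of_mul_eq_one hH.residue_inv_mul_eq_one
      (hH.residue_apply_eq_zero hπ)).ne_zero

theorem nonsing_inv (hπ : Irreducible π) (hH : IsIntegralParahoric π H) :
    IsIntegralParahoric π H⁻¹ :=
  ⟨Matrix.isUnit_nonsing_inv_det _ hH.1, fun _ hi =>
    (mem_span_singleton_iff_residue_eq_zero hπ _).mpr
      (Matrix.apply_eq_zero_of_mul_eq_one hH.residue_inv_mul_eq_one
        (hH.residue_apply_eq_zero hπ) hi)⟩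

theorem exists_ne_zero_isUnit_apply (hπ : Irreducible π) (hH : IsIntegralParahoric π H)
    {c : Fin r} (hc : c ≠ 0) : ∃ i, i ≠ 0 ∧ IsUnit (H i c) := by
  obtain ⟨i, hi, hHi⟩ := Matrix.exists_ne_apply_ne_zero_of_mul_eq_one
    hH.residue_inv_mul_eq_one (hH.residue_apply_eq_zero hπ) hc
  exact ⟨i, hi, (IsLocalRing.residue_ne_zero_iff_isUnit _).mp hHi⟩

end IsIntegralParahoric

end DiscreteValuationRing

section MatrixMap

variable {R K : Type*} [CommRing R] [Field K] (f : R →+* K) {n : Type*} [Fintype n]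
  [DecidableEq n] {W : Matrix n n K} {z : K} {H : Matrix n n R}

theorem isUnit_det_mul_smul_map (hW : IsUnit W.det) (hz : z ≠ 0) (hH : IsUnit H.det) :
    IsUnit (W * (z • H.map f)).det := by
  rw [det_mul, det_smul, ← RingHom.mapMatrix_apply, ← RingHom.map_det]
  exact hW.mul ((isUnit_iff_ne_zero.mpr (pow_ne_zero _ hz)).mul (hH.map f))

theorem mul_smul_map_inv_mulVec_single {c i₀ : n} (hW : IsUnit W.det)
    (hWc : W *ᵥ Pi.single c 1 = Pi.single i₀ 1) (hz : z ≠ 0) (hH : IsUnit H.det) :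
    (W * (z • H.map f))⁻¹ *ᵥ Pi.single i₀ 1 = z⁻¹ • (f ∘ fun i => H⁻¹ i c) := by
  have hWinv : W⁻¹ *ᵥ Pi.single i₀ 1 = Pi.single c 1 := by
    rw [← hWc, mulVec_mulVec, nonsing_inv_mul _ hW, one_mulVec]
  have hHf : IsUnit (H.map f).det := (RingHom.map_det f H).symm ▸ hH.map f
  have := invertibleOfNonzero hz
  rw [Matrix.mul_inv_rev, inv_smul _ _ hHf, invOf_eq_inv, ← map_nonsing_inv _ hH,
    ← mulVec_mulVec, hWinv, smul_mulVec, mulVec_single_one]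
  rfl

end MatrixMap

section DoubleCosets

variable {O K : Type*} [CommRing O] [IsDomain O] [IsDiscreteValuationRing O]
  [Field K] [Algebra O K] {r : ℕ} [NeZero r] {π : O}

theorem exists_mirabolicMem_mul_parahoricMem_iff (hπ : Irreducible π)
    {W g : Matrix (Fin r) (Fin r) K} {c : Fin r} (hW : IsUnit W.det)
    (hWc : W *ᵥ Pi.single c 1 = Pi.single 0 1) (hg : IsUnit g.det) :
    (∃ (p h : Matrix (Fin r) (Fin r) K) (z : K), MirabolicMem p ∧ z ≠ 0 ∧ ParahoricMem π h ∧
        g = p * W * (z • h)) ↔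
      ∃ z : K, z ≠ 0 ∧ ∃ H, IsIntegralParahoric π H ∧
        g⁻¹ *ᵥ Pi.single 0 1 = z • (algebraMap O K ∘ fun i => H i c) := by
  constructor
  · rintro ⟨p, h, z, hp, hz, hh, rfl⟩
    obtain ⟨H, hH, rfl⟩ := parahoricMem_iff.mp hh
    have := (exists_mirabolicMem_mul_eq_iff hg (isUnit_det_mul_smul_map _ hW hz hH.1)).mp
      ⟨p, hp, mul_assoc _ _ _⟩
    refine ⟨z⁻¹, inv_ne_zero hz, H⁻¹, hH.nonsing_inv hπ, ?_⟩
    rw [← this, mul_smul_map_inv_mulVec_single _ hW hWc hz hH.1]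
  · rintro ⟨z, hz, H, hH, hv⟩
    have hH' := hH.nonsing_inv hπ
    obtain ⟨p, hp, hgp⟩ := (exists_mirabolicMem_mul_eq_iff hg
      (isUnit_det_mul_smul_map _ hW (inv_ne_zero hz) hH'.1)).mpr <| by
        rw [mul_smul_map_inv_mulVec_single _ hW hWc (inv_ne_zero hz) hH'.1, inv_inv,
          nonsing_inv_nonsing_inv _ hH.1, hv]
    exact ⟨p, _, z⁻¹, hp, inv_ne_zero hz, parahoricMem_iff.mpr ⟨_, hH', rfl⟩,
      by rw [hgp, mul_assoc]⟩

theorem inPKI_iff (hπ : Irreducible π) {g : Matrix (Fin r) (Fin r) K}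
    (hg : IsUnit g.det) :
    InPKI π g ↔ ∃ z : K, z ≠ 0 ∧ ∃ H, IsIntegralParahoric π H ∧
      g⁻¹ *ᵥ Pi.single 0 1 = z • (algebraMap O K ∘ fun i => H i 0) := by
  simpa only [InPKI, Matrix.mul_one] using
    exists_mirabolicMem_mul_parahoricMem_iff hπ (by simp) (one_mulVec _) hg

theorem inPwKI_iff (hπ : Irreducible π) (hr : 2 ≤ r) {g : Matrix (Fin r) (Fin r) K}
    (hg : IsUnit g.det) :
    InPwKI π g ↔ ∃ z : K, z ≠ 0 ∧ ∃ H, IsIntegralParahoric π H ∧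
      g⁻¹ *ᵥ Pi.single 0 1 = z • (algebraMap O K ∘ fun i => H i 1) :=
  exists_mirabolicMem_mul_parahoricMem_iff hπ isUnit_det_wperm (wperm_mulVec_single_one hr) hg

end DoubleCosets

section

variable {O K : Type*} [CommRing O] [IsDomain O] [IsDiscreteValuationRing O]
  [Field K] [Algebra O K] [IsFractionRing O K] {r : ℕ} [NeZero r]

theorem inPKI_or_inPwKI {π : O} (hπ : Irreducible π) (hr : 2 ≤ r)
    {g : Matrix (Fin r) (Fin r) K} (hg : IsUnit g.det) : InPKI π g ∨ InPwKI π g := by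
  have hv : g⁻¹ *ᵥ Pi.single 0 1 ≠ 0 := fun h => by
    have := congrArg (g *ᵥ ·) h
    simp only [mulVec_mulVec, mul_nonsing_inv _ hg, one_mulVec, mulVec_zero] at this
    simpa using congrFun this 0
  obtain ⟨z, hz, w, ⟨j, hj⟩, hvw⟩ := exists_eq_smul_algebraMap_comp (O := O) hv
  by_cases hw : ∀ i, i ≠ 0 → w i ∈ Ideal.span {π}
  · have hw₀ : IsUnit (w 0) := by
      obtain rfl | hj₀ := eq_or_ne j 0
      · exact hj ▸ isUnit_one
      · exact absurd (hj ▸ isUnit_one) ((mem_span_singleton_iff_not_isUnit hπ _).mp (hw j hj₀))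
    obtain ⟨H, hH, hHw⟩ := exists_isIntegralParahoric_col_zero_eq hw₀ hw
    exact .inl <| (inPKI_iff hπ hg).mpr ⟨z, hz, H, hH, by simp only [hHw, hvw]⟩
  · push Not at hw
    obtain ⟨i, hi, hwi⟩ := hw
    obtain ⟨H, hH, hHw⟩ := exists_isIntegralParahoric_col_eq (π := π)
      (Fin.one_eq_zero_iff.not.mpr (by omega)) hi
      (not_not.mp ((mem_span_singleton_iff_not_isUnit hπ _).not.mp hwi))
    exact .inr <| (inPwKI_iff hπ hr hg).mpr ⟨z, hz, H, hH, by simp only [hHw, hvw]⟩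

theorem not_inPKI_and_inPwKI {π : O} (hπ : Irreducible π) (hr : 2 ≤ r)
    {g : Matrix (Fin r) (Fin r) K} (hg : IsUnit g.det) : ¬ (InPKI π g ∧ InPwKI π g) := by
  rintro ⟨hPKI, hPwKI⟩
  obtain ⟨z, hz, H, hH, hv⟩ := (inPKI_iff hπ hg).mp hPKI
  obtain ⟨z', -, H', hH', hv'⟩ := (inPwKI_iff hπ hr hg).mp hPwKI
  obtain ⟨i, hi, hH'i⟩ :=
    hH'.exists_ne_zero_isUnit_apply hπ (Fin.one_eq_zero_iff.not.mpr (by omega))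
  have hmem : H i 0 * H' 0 1 ∈ Ideal.span {π} := Ideal.mul_mem_right _ _ (hH.2 i hi)
  rw [← mul_eq_mul_of_smul_eq_smul hz (hv.symm.trans hv') 0 i,
    mem_span_singleton_iff_not_isUnit hπ] at hmem
  exact hmem ((hH.isUnit_apply_zero_zero hπ).mul hH'i)

/-- `GL_r(K) = P(K)·K^×·I^1 ⊔ P(K)·w·K^×·I^1`, a disjoint union; in
particular `w ∉ P(K)·K^×·I^1`. -/
theorem stmt_8 (π : O) (hπ : Irreducible π) (hr : 2 ≤ r) :
    (∀ g : Matrix (Fin r) (Fin r) K, IsUnit g.det →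
      (InPKI π g ∨ InPwKI π g) ∧ ¬ (InPKI π g ∧ InPwKI π g)) ∧
    ¬ InPKI π (Wperm : Matrix (Fin r) (Fin r) K) := by
  have hdecomp : ∀ g : Matrix (Fin r) (Fin r) K, IsUnit g.det →
      (InPKI π g ∨ InPwKI π g) ∧ ¬ (InPKI π g ∧ InPwKI π g) := fun _ hg =>
    ⟨inPKI_or_inPwKI hπ hr hg, not_inPKI_and_inPwKI hπ hr hg⟩
  exact ⟨hdecomp, fun hw => (hdecomp Wperm isUnit_det_wperm).2 ⟨hw, inPwKI_wperm π⟩⟩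

end
end
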